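/- arXiv:1810.04489 — 6 statements merged into one kernel-verified Lean document; each statement's English description precedes it below -/
import Mathlib

section
/- Let w > 2 and let F(w) := {z ∈ ℂ : Im z > 0, |Re z| < w/2, |z| > 1}. Then F(w) is a fundamental domain for the action of the Hecke triangle group Γ_w on the upper half-plane ℍ in the following sense: (i) for every z ∈ ℍ there exists γ ∈ Γ_w such that γ • z lies in the closure of F(w) (taken inside ℍ); and (ii) if z, z' ∈ F(w) and γ ∈ Γ_w satisfy γ • z = z', then z = z'. -/
/-!
Existence is the reduction algorithm: translate `z` by a power of `T_w` into the strip
`|Re z| ≤ w/2` and, if then `|z| < 1`, apply `S`. If the result still has modulus `≥ w/2`, then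
`|z| ≤ 2/w` before inverting, so `S` multiplied `Im z` by at least `w/2 > 1`. An inversion is
only needed while `Im z < 1`, so the process stops after finitely many steps.

Uniqueness is a ping-pong argument. Up to sign, every element of `Γ_w` is a reduced alternating
word in `S` and nonzero powers of `T_w`. Since `w/2 > 1`, such a word maps `F(w)` into the disc
`|z| < 1` if its leftmost letter is `S`, and into `|Re z| > w/2` if it is a power of `T_w`; both
regions are disjoint from `F(w)`.
-/

open MeasureTheory

/-- `S = [[0,1],[-1,0]]` as an element of `SL(2,ℝ)`. -/
noncomputable def S : Matrix.SpecialLinearGroup (Fin 2) ℝ :=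
  ⟨!![0, 1; -1, 0], by norm_num [Matrix.det_fin_two_of]⟩

/-- `T_w = [[1,w],[0,1]]` as an element of `SL(2,ℝ)`. -/
noncomputable def T (w : ℝ) : Matrix.SpecialLinearGroup (Fin 2) ℝ :=
  ⟨!![1, w; 0, 1], by norm_num [Matrix.det_fin_two_of]⟩

/-- The Hecke triangle group `Γ_w`, the subgroup of `SL(2,ℝ)` generated by `S` and `T_w`. -/
noncomputable def heckeGroup (w : ℝ) : Subgroup (Matrix.SpecialLinearGroup (Fin 2) ℝ) :=
  Subgroup.closure {S, T w}

/-- The Möbius action of an element of `SL(2,ℝ)` on `ℂ`. -/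
noncomputable def moebius (γ : Matrix.SpecialLinearGroup (Fin 2) ℝ) (z : ℂ) : ℂ :=
  (((γ : Matrix (Fin 2) (Fin 2) ℝ) 0 0 : ℝ) * z + ((γ : Matrix (Fin 2) (Fin 2) ℝ) 0 1 : ℝ)) /
    (((γ : Matrix (Fin 2) (Fin 2) ℝ) 1 0 : ℝ) * z + ((γ : Matrix (Fin 2) (Fin 2) ℝ) 1 1 : ℝ))

open Filter Topology
open scoped MatrixGroups

lemma coe_S : (S : Matrix (Fin 2) (Fin 2) ℝ) = !![0, 1; -1, 0] := rfl

lemma coe_T (w : ℝ) : (T w : Matrix (Fin 2) (Fin 2) ℝ) = !![1, w; 0, 1] := rfl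

lemma moebius_coe (γ : SL(2, ℝ)) (τ : UpperHalfPlane) : moebius γ τ = ↑(γ • τ) := by
  simp [moebius, UpperHalfPlane.coe_specialLinearGroup_apply]

lemma im_moebius_pos (γ : SL(2, ℝ)) {z : ℂ} (hz : 0 < z.im) : 0 < (moebius γ z).im := by
  lift z to UpperHalfPlane using hz
  rw [moebius_coe]
  exact (γ • z).im_pos

lemma moebius_mul (γ₁ γ₂ : SL(2, ℝ)) {z : ℂ} (hz : 0 < z.im) :
    moebius (γ₁ * γ₂) z = moebius γ₁ (moebius γ₂ z) := by
  lift z to UpperHalfPlane using hz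
  rw [moebius_coe, moebius_coe, moebius_coe, mul_smul]

lemma moebius_one (z : ℂ) : moebius 1 z = z := by
  simp [moebius]

lemma moebius_neg (γ : SL(2, ℝ)) (z : ℂ) : moebius (-γ) z = moebius γ z := by
  simp only [moebius, Matrix.SpecialLinearGroup.coe_neg, Matrix.neg_apply, Complex.ofReal_neg,
    neg_mul, ← neg_add, neg_div_neg_eq]

lemma moebius_S (z : ℂ) : moebius S z = -z⁻¹ := by
  simp [moebius, coe_S]

lemma S_mul_S : S * S = -1 := by
  ext i j
  fin_cases i <;> fin_cases j <;> simp [coe_S]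

lemma S_inv : S⁻¹ = -S :=
  inv_eq_of_mul_eq_one_right (by rw [mul_neg, S_mul_S, neg_neg])

lemma T_zero : T 0 = 1 := by
  ext i j
  fin_cases i <;> fin_cases j <;> simp [coe_T]

lemma T_add (u v : ℝ) : T (u + v) = T u * T v := by
  ext i j
  fin_cases i <;> fin_cases j <;> simp [coe_T, add_comm]

lemma T_zpow (w : ℝ) (m : ℤ) : T w ^ m = T (m * w) := by
  induction m using Int.induction_on with
  | zero => simp [T_zero]
  | succ k ih => rw [zpow_add_one, ih, ← T_add]; push_cast; ring_nf
  | pred k ih => rw [zpow_sub_one, ih, mul_inv_eq_iff_eq_mul, ← T_add]; push_cast; ring_nf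

lemma moebius_T_zpow (w : ℝ) (m : ℤ) (z : ℂ) : moebius (T w ^ m) z = z + (m * w : ℝ) := by
  rw [T_zpow]
  simp [moebius, coe_T]

lemma S_mem_heckeGroup (w : ℝ) : S ∈ heckeGroup w :=
  Subgroup.subset_closure (Set.mem_insert _ _)

lemma T_mem_heckeGroup (w : ℝ) : T w ∈ heckeGroup w :=
  Subgroup.subset_closure (Set.mem_insert_of_mem _ rfl)

lemma exists_int_abs_add_mul_le {w : ℝ} (hw : 0 < w) (x : ℝ) :
    ∃ m : ℤ, |x + m * w| ≤ w / 2 := by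
  refine ⟨-round (x / w), ?_⟩
  have h : x + ((-round (x / w) : ℤ) : ℝ) * w = (x / w - round (x / w)) * w := by
    push_cast
    field_simp
    ring
  rw [h, abs_mul, abs_of_pos hw]
  nlinarith [abs_sub_round (x / w)]

lemma half_lt_abs_add_int_mul {w x : ℝ} (hw : 0 < w) (hx : |x| < w / 2) {m : ℤ} (hm : m ≠ 0) :
    w / 2 < |x + m * w| := by
  have hm1 : (1 : ℝ) ≤ |(m : ℝ)| := by exact_mod_cast Int.one_le_abs hm
  have hmw : w ≤ |m * w| := by rw [abs_mul, abs_of_pos hw]; nlinarith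
  have htri := abs_sub_abs_le_abs_sub (m * w) (-x)
  rw [abs_neg, sub_neg_eq_add, add_comm] at htri
  linarith

def heckeDomain (w : ℝ) : Set ℂ := {z | 0 < z.im ∧ |z.re| < w / 2 ∧ 1 < ‖z‖}

def closedHeckeDomain (w : ℝ) : Set ℂ := {z | 0 < z.im ∧ |z.re| ≤ w / 2 ∧ 1 ≤ ‖z‖}

lemma closedHeckeDomain_subset_closure {w : ℝ} (hw : 0 < w) :
    closedHeckeDomain w ⊆ closure (heckeDomain w) := by
  rintro ζ ⟨him, hre, hnorm⟩
  set c := (ζ.re ^ 2 + 1) / ζ.im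
  have hc : c * ζ.im = ζ.re ^ 2 + 1 := div_mul_cancel₀ _ him.ne'
  let path : ℝ → ℂ := fun t => ζ + t * ⟨-ζ.re, c⟩
  have hlim : Tendsto path (𝓝[>] 0) (𝓝 ζ) := by
    have : Continuous path := by fun_prop
    simpa [path] using (this.tendsto 0).mono_left nhdsWithin_le_nhds
  refine mem_closure_of_tendsto hlim ?_
  filter_upwards [Ioo_mem_nhdsGT one_pos] with t ⟨ht0, ht1⟩
  have hre' : (path t).re = (1 - t) * ζ.re := by simp [path]; ring
  have him' : (path t).im = ζ.im + t * c := by simp [path]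
  refine ⟨by rw [him']; positivity, ?_, ?_⟩
  · rw [hre', abs_mul, abs_of_pos (by linarith)]
    nlinarith [abs_nonneg ζ.re]
  · rw [← one_lt_sq_iff₀ (norm_nonneg _), Complex.sq_norm, Complex.normSq_apply, hre', him']
    rw [← one_le_sq_iff₀ (norm_nonneg _), Complex.sq_norm, Complex.normSq_apply] at hnorm
    have hexpand : (1 - t) * ζ.re * ((1 - t) * ζ.re) + (ζ.im + t * c) * (ζ.im + t * c) =
        ζ.re * ζ.re + ζ.im * ζ.im + 2 * t + t ^ 2 * (ζ.re ^ 2 + c ^ 2) := by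
      linear_combination 2 * t * hc
    rw [hexpand]
    nlinarith [sq_nonneg t, sq_nonneg ζ.re, sq_nonneg c]

lemma exists_moebius_mem_closedHeckeDomain_or_im_lt {w : ℝ} (hw : 2 < w) {z : ℂ}
    (hz : 0 < z.im) :
    (∃ γ ∈ heckeGroup w, moebius γ z ∈ closedHeckeDomain w) ∨
      z.im < 1 ∧ ∃ γ ∈ heckeGroup w, w / 2 * z.im ≤ (moebius γ z).im := by
  obtain ⟨m, hm⟩ := exists_int_abs_add_mul_le (by linarith : 0 < w) z.re
  have hmem₁ : T w ^ m ∈ heckeGroup w := zpow_mem (T_mem_heckeGroup w) m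
  have hmem₂ : S * T w ^ m ∈ heckeGroup w := mul_mem (S_mem_heckeGroup w) hmem₁
  set z₁ := moebius (T w ^ m) z with hz₁
  have hz₂ : moebius (S * T w ^ m) z = -z₁⁻¹ := by rw [moebius_mul _ _ hz, moebius_S]
  rw [moebius_T_zpow] at hz₁
  have him₁ : z₁.im = z.im := by simp [hz₁]
  have hre₁ : |z₁.re| ≤ w / 2 := by simpa [hz₁] using hm
  by_cases hnorm₁ : 1 ≤ ‖z₁‖
  · exact .inl ⟨_, hmem₁, him₁ ▸ hz, hre₁, hnorm₁⟩
  rw [not_le] at hnorm₁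
  have hpos : 0 < ‖z₁‖ := (him₁ ▸ hz).trans_le (Complex.im_le_norm z₁)
  by_cases hlarge : 1 ≤ w / 2 * ‖z₁‖
  · refine .inl ⟨_, hmem₂, im_moebius_pos _ hz, ?_, ?_⟩ <;> rw [hz₂]
    · calc |(-z₁⁻¹).re| ≤ ‖z₁‖⁻¹ := by simpa using Complex.abs_re_le_norm z₁⁻¹
        _ ≤ w / 2 := by rw [inv_le_iff_one_le_mul₀ hpos]; linarith
    · rw [norm_neg, norm_inv]
      exact (one_le_inv₀ hpos).2 hnorm₁.le
  rw [not_le] at hlarge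
  refine .inr ⟨him₁ ▸ (Complex.im_le_norm z₁).trans_lt hnorm₁, _, hmem₂, ?_⟩
  have him₂ : (-z₁⁻¹).im = z₁.im / ‖z₁‖ ^ 2 := by
    rw [Complex.neg_im, Complex.inv_im, Complex.sq_norm, neg_div, neg_neg]
  have hsq : w / 2 * ‖z₁‖ ^ 2 < 1 := by nlinarith
  rw [hz₂, him₂, him₁, le_div_iff₀ (by positivity)]
  nlinarith

lemma exists_moebius_mem_closedHeckeDomain_of_one_le {w : ℝ} (hw : 2 < w) (n : ℕ) :
    ∀ z : ℂ, 0 < z.im → 1 ≤ (w / 2) ^ n * z.im →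
      ∃ γ ∈ heckeGroup w, moebius γ z ∈ closedHeckeDomain w := by
  induction n with
  | zero =>
    intro z hz hn
    rcases exists_moebius_mem_closedHeckeDomain_or_im_lt hw hz with hdone | ⟨hlt, -⟩
    · exact hdone
    · rw [pow_zero, one_mul] at hn
      exact absurd hn (not_le.2 hlt)
  | succ n ih =>
    intro z hz hn
    rcases exists_moebius_mem_closedHeckeDomain_or_im_lt hw hz with hdone | ⟨-, γ, hγ, him⟩
    · exact hdone
    obtain ⟨γ', hγ', hmem⟩ := ih (moebius γ z) (im_moebius_pos γ hz) <| calc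
      1 ≤ (w / 2) ^ (n + 1) * z.im := hn
      _ = (w / 2) ^ n * (w / 2 * z.im) := by ring
      _ ≤ (w / 2) ^ n * (moebius γ z).im := by gcongr
    exact ⟨γ' * γ, mul_mem hγ' hγ, by rwa [moebius_mul _ _ hz]⟩

lemma exists_moebius_mem_closedHeckeDomain {w : ℝ} (hw : 2 < w) {z : ℂ} (hz : 0 < z.im) :
    ∃ γ ∈ heckeGroup w, moebius γ z ∈ closedHeckeDomain w := by
  obtain ⟨n, hn⟩ := pow_unbounded_of_one_lt z.im⁻¹ (by linarith : 1 < w / 2)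
  refine exists_moebius_mem_closedHeckeDomain_of_one_le hw n z hz ?_
  rw [inv_lt_iff_one_lt_mul₀ hz] at hn
  linarith

inductive WordHead
  | empty
  | s
  | t

/-- Up to sign, `γ` is an alternating word in `S` and nonzero powers of `T w` whose leftmost
letter is of kind `h` (`.empty` for the empty word). -/
inductive IsReducedWord (w : ℝ) : SL(2, ℝ) → WordHead → Prop
  | one : IsReducedWord w 1 .empty
  | neg {γ h} : IsReducedWord w γ h → IsReducedWord w (-γ) h
  | S_mul {γ h} : IsReducedWord w γ h → h ≠ .s → IsReducedWord w (S * γ) .s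
  | T_zpow_mul {γ h} (m : ℤ) : m ≠ 0 → IsReducedWord w γ h → h ≠ .t →
      IsReducedWord w (T w ^ m * γ) .t

namespace IsReducedWord

variable {w : ℝ} {γ : SL(2, ℝ)} {h : WordHead}

lemma exists_S_mul (hγ : IsReducedWord w γ h) : ∃ h', IsReducedWord w (S * γ) h' := by
  induction hγ with
  | one => exact ⟨_, .S_mul .one nofun⟩
  | neg _ ih =>
    obtain ⟨h', hγ'⟩ := ih
    exact ⟨h', mul_neg S _ ▸ hγ'.neg⟩
  | @S_mul γ h hγ _ _ =>
    refine ⟨h, ?_⟩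
    rw [← mul_assoc, S_mul_S, neg_one_mul]
    exact hγ.neg
  | T_zpow_mul m hm hγ hh _ => exact ⟨_, .S_mul (.T_zpow_mul m hm hγ hh) nofun⟩

lemma exists_T_zpow_mul (hγ : IsReducedWord w γ h) {k : ℤ} (hk : k ≠ 0) :
    ∃ h', IsReducedWord w (T w ^ k * γ) h' := by
  induction hγ with
  | one => exact ⟨_, .T_zpow_mul k hk .one nofun⟩
  | neg _ ih =>
    obtain ⟨h', hγ'⟩ := ih
    exact ⟨h', mul_neg (T w ^ k) _ ▸ hγ'.neg⟩
  | S_mul hγ hh _ => exact ⟨_, .T_zpow_mul k hk (.S_mul hγ hh) nofun⟩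
  | @T_zpow_mul γ h m _ hγ hh _ =>
    rw [← mul_assoc, ← zpow_add]
    by_cases hkm : k + m = 0
    · rw [hkm, zpow_zero, one_mul]
      exact ⟨h, hγ⟩
    · exact ⟨_, .T_zpow_mul _ hkm hγ hh⟩

end IsReducedWord

lemma exists_isReducedWord {w : ℝ} {γ : SL(2, ℝ)} (hγ : γ ∈ heckeGroup w) :
    ∃ h, IsReducedWord w γ h := by
  induction hγ using Subgroup.closure_induction_left with
  | one => exact ⟨_, .one⟩
  | mul_left x hx y _ ih =>
    obtain ⟨h, hy⟩ := ih
    rcases hx with rfl | rfl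
    · exact hy.exists_S_mul
    · simpa using hy.exists_T_zpow_mul one_ne_zero
  | inv_mul_cancel x hx y _ ih =>
    obtain ⟨h, hy⟩ := ih
    rcases hx with rfl | rfl
    · obtain ⟨h', hy'⟩ := hy.exists_S_mul
      exact ⟨h', S_inv ▸ neg_mul S y ▸ hy'.neg⟩
    · simpa using hy.exists_T_zpow_mul (k := -1) (by norm_num)

def pingPongRegion (w : ℝ) (z : ℂ) : WordHead → Set ℂ
  | .empty => {z}
  | .s => {ζ | ‖ζ‖ < 1}
  | .t => {ζ | w / 2 < |ζ.re|}

section PingPong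

variable {w : ℝ} {z ζ : ℂ} {h : WordHead}

lemma one_lt_norm_of_mem_pingPongRegion (hw : 2 < w) (hz : z ∈ heckeDomain w)
    (hζ : ζ ∈ pingPongRegion w z h) (hh : h ≠ .s) : 1 < ‖ζ‖ := by
  cases h with
  | empty => exact (Set.mem_singleton_iff.1 hζ) ▸ hz.2.2
  | s => exact absurd rfl hh
  | t => exact (by linarith : 1 < w / 2).trans (lt_of_lt_of_le hζ (Complex.abs_re_le_norm ζ))

lemma abs_re_lt_of_mem_pingPongRegion (hw : 2 < w) (hz : z ∈ heckeDomain w)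
    (hζ : ζ ∈ pingPongRegion w z h) (hh : h ≠ .t) : |ζ.re| < w / 2 := by
  cases h with
  | empty => exact (Set.mem_singleton_iff.1 hζ) ▸ hz.2.1
  | s => exact (Complex.abs_re_le_norm ζ).trans_lt (lt_trans hζ (by linarith))
  | t => exact absurd rfl hh

lemma eq_of_mem_heckeDomain_of_mem_pingPongRegion (hζ : ζ ∈ heckeDomain w)
    (hζ' : ζ ∈ pingPongRegion w z h) : ζ = z := by
  cases h with
  | empty => exact hζ'
  | s => exact (lt_asymm hζ' hζ.2.2).elim
  | t => exact (lt_asymm hζ' hζ.2.1).elim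

lemma IsReducedWord.moebius_mem_pingPongRegion (hw : 2 < w) {γ : SL(2, ℝ)}
    (hγ : IsReducedWord w γ h) (hz : z ∈ heckeDomain w) :
    moebius γ z ∈ pingPongRegion w z h := by
  induction hγ with
  | one => simp [pingPongRegion, moebius_one]
  | neg _ ih => rwa [moebius_neg]
  | S_mul _ hh ih =>
    rw [moebius_mul _ _ hz.1, moebius_S]
    show ‖-_‖ < 1
    rw [norm_neg, norm_inv]
    exact inv_lt_one_of_one_lt₀ (one_lt_norm_of_mem_pingPongRegion hw hz ih hh)
  | T_zpow_mul m hm _ hh ih =>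
    rw [moebius_mul _ _ hz.1, moebius_T_zpow]
    show w / 2 < |(_ + _ : ℂ).re|
    have hre := abs_re_lt_of_mem_pingPongRegion hw hz ih hh
    simpa using half_lt_abs_add_int_mul (by linarith) hre hm

end PingPong

theorem fundamental_domain_hecke (w : ℝ) (hw : 2 < w)
    (F : Set ℂ) (hF : F = {z : ℂ | 0 < z.im ∧ |z.re| < w / 2 ∧ 1 < ‖z‖}) :
    (∀ z : ℂ, 0 < z.im →
      ∃ γ ∈ heckeGroup w, moebius γ z ∈ closure F ∧ 0 < (moebius γ z).im) ∧
    (∀ z ∈ F, ∀ z' ∈ F, ∀ γ ∈ heckeGroup w, moebius γ z = z' → z = z') := by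
  subst hF
  refine ⟨fun z hz => ?_, fun z hz z' hz' γ hγ hγz => ?_⟩
  · obtain ⟨γ, hγ, hmem⟩ := exists_moebius_mem_closedHeckeDomain hw hz
    exact ⟨γ, hγ, closedHeckeDomain_subset_closure (by linarith) hmem, hmem.1⟩
  · obtain ⟨h, hword⟩ := exists_isReducedWord hγ
    have hmem := hγz ▸ hword.moebius_mem_pingPongRegion hw hz
    exact (eq_of_mem_heckeDomain_of_mem_pingPongRegion hz' hmem).symm
end

section
/- Let w > 2. The group homomorphism from the free group on two generators a, b to SL(2,ℝ) determined by a ↦ T_w = ![![1,w],![0,1]] and b ↦ S·T_w·S⁻¹ = ![![1,0],![-w,1]] is injective; that is, T_w and S·T_w·S⁻¹ generate a free subgroup of SL(2,ℝ) of rank 2, freely generated by these two elements. -/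
open MeasureTheory

/-!
Ping-pong on the nonzero vectors `(x, y)` of `ℝ²`, read through their slopes
`t = x / y ∈ ℝ ∪ {∞}`: `T w` acts by `t ↦ t + w` and `S` by `t ↦ -1 / t`. So `T w` maps the
complement of `Y = (-∞, 1 - w)` onto `X = [1, ∞]` and `(T w)⁻¹` maps the complement of `X` onto
`Y`; conjugating by `S`, the element `S * T w * S⁻¹` plays the same game with `S • X = [-1, 0]`
and `S • Y = (0, 1 / (w - 1))`. For `w ≥ 2` these four arcs are pairwise disjoint.
-/

open scoped Pointwise MatrixGroups

lemma conj_smul_compl_subset {G α : Type*} [Group G] [MulAction G α] {g : G} {X Y : Set α}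
    (h : G) (hg : g • Yᶜ ⊆ X) : (h * g * h⁻¹) • (h • Y)ᶜ ⊆ h • X := by
  rw [← Set.smul_set_compl, ← smul_smul, ← smul_smul, inv_smul_smul]
  exact Set.smul_set_mono hg

def SubMulAction.nonzero (G V : Type*) [Group G] [AddMonoid V] [DistribMulAction G V] :
    SubMulAction G V where
  carrier := {v | v ≠ 0}
  smul_mem' g _ hv := (smul_ne_zero_iff_ne g).2 hv

lemma sq_add_sq_pos_of_ne_zero {v : Fin 2 → ℝ} (hv : v ≠ 0) : 0 < v 0 ^ 2 + v 1 ^ 2 := by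
  refine (add_nonneg (sq_nonneg _) (sq_nonneg _)).lt_of_ne fun h => hv ?_
  obtain ⟨h0, h1⟩ := (add_eq_zero_iff_of_nonneg (sq_nonneg _) (sq_nonneg _)).1 h.symm
  ext i
  fin_cases i
  exacts [pow_eq_zero_iff two_ne_zero |>.1 h0, pow_eq_zero_iff two_ne_zero |>.1 h1]

lemma T_smul (w : ℝ) (v : Fin 2 → ℝ) : T w • v = ![v 0 + w * v 1, v 1] := by
  rw [Matrix.SpecialLinearGroup.smul_def, Matrix.smul_eq_mulVec, Matrix.mulVec_fin_two]
  simp [T]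

lemma T_inv (w : ℝ) : (T w)⁻¹ = T (-w) := by
  refine Subtype.ext ?_
  rw [Matrix.SpecialLinearGroup.coe_inv]
  show Matrix.adjugate !![1, w; 0, 1] = !![1, -w; 0, 1]
  rw [Matrix.adjugate_fin_two_of, neg_zero]

lemma S_inv_smul (v : Fin 2 → ℝ) : S⁻¹ • v = ![-v 1, v 0] := by
  rw [Matrix.SpecialLinearGroup.smul_def, Matrix.smul_eq_mulVec,
    Matrix.SpecialLinearGroup.coe_inv, Matrix.mulVec_fin_two]
  simp [S, Matrix.adjugate_fin_two_of]

abbrev NonzeroVec : Type := SubMulAction.nonzero SL(2, ℝ) (Fin 2 → ℝ)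

/-- The vectors `(x, y)` with slope `x / y ∈ [c, ∞]`, where `y = 0` counts as slope `∞`. -/
def slopeIci (c : ℝ) : Set NonzeroVec := {v | c * v.1 1 ^ 2 ≤ v.1 0 * v.1 1}

lemma mem_slopeIci {c : ℝ} {v : NonzeroVec} : v ∈ slopeIci c ↔ c * v.1 1 ^ 2 ≤ v.1 0 * v.1 1 :=
  Iff.rfl

lemma slopeIci_nonempty (c : ℝ) : (slopeIci c).Nonempty :=
  ⟨⟨![1, 0], fun h => by simpa using congrFun h 0⟩, by simp [mem_slopeIci]⟩

lemma slopeIci_anti : Antitone slopeIci := fun _ _ hcd _ hv =>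
  le_trans (by gcongr) (mem_slopeIci.1 hv)

lemma T_smul_slopeIci (w c : ℝ) : T w • slopeIci c = slopeIci (c + w) := by
  ext v
  rw [Set.mem_smul_set_iff_inv_smul_mem, mem_slopeIci, mem_slopeIci, SubMulAction.val_smul,
    T_inv, T_smul]
  simp only [Matrix.cons_val_zero, Matrix.cons_val_one]
  constructor <;> intro h <;> linarith

lemma mem_S_smul_slopeIci {c : ℝ} {v : NonzeroVec} :
    v ∈ S • slopeIci c ↔ c * v.1 0 ^ 2 ≤ -(v.1 0 * v.1 1) := by
  rw [Set.mem_smul_set_iff_inv_smul_mem, mem_slopeIci, SubMulAction.val_smul, S_inv_smul]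
  simp only [Matrix.cons_val_zero, Matrix.cons_val_one]
  ring_nf

lemma disjoint_slopeIci_S_smul_slopeIci {c : ℝ} (hc : 0 < c) :
    Disjoint (slopeIci c) (S • slopeIci c) := by
  refine Set.disjoint_left.2 fun v h₁ h₂ => ?_
  rw [mem_slopeIci] at h₁
  rw [mem_S_smul_slopeIci] at h₂
  nlinarith [sq_add_sq_pos_of_ne_zero v.2]

lemma disjoint_compl_slopeIci_S_smul_compl_slopeIci {c : ℝ} (hc : c ≤ 0) :
    Disjoint (slopeIci c)ᶜ (S • (slopeIci c)ᶜ) := by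
  refine Set.disjoint_left.2 fun v h₁ h₂ => ?_
  rw [Set.mem_compl_iff, mem_slopeIci, not_le] at h₁
  rw [Set.smul_set_compl, Set.mem_compl_iff, mem_S_smul_slopeIci, not_le] at h₂
  nlinarith [sq_nonneg (v.1 0), sq_nonneg (v.1 1)]

lemma disjoint_slopeIci_S_smul_compl_slopeIci {c d : ℝ} (hc : 0 < c) (hcd : c * d ≤ -1) :
    Disjoint (slopeIci c) (S • (slopeIci d)ᶜ) := by
  refine Set.disjoint_left.2 fun v h₁ h₂ => ?_
  rw [mem_slopeIci] at h₁
  rw [Set.smul_set_compl, Set.mem_compl_iff, mem_S_smul_slopeIci, not_le] at h₂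
  set x := v.1 0
  set y := v.1 1
  have hd : 0 ≤ -d := by nlinarith
  have hxy : 0 < x * y := by nlinarith [mul_nonneg hd (sq_nonneg x)]
  -- `(x y)² > (x y) (-d x²) ≥ (c y²) (-d x²) ≥ x² y²`, absurd
  nlinarith [mul_lt_mul_of_pos_left (show -d * x ^ 2 < x * y by linarith) hxy,
    mul_le_mul_of_nonneg_right h₁ (mul_nonneg hd (sq_nonneg x)),
    mul_le_mul_of_nonneg_right hcd (mul_nonneg (sq_nonneg x) (sq_nonneg y))]

lemma disjoint_S_smul_slopeIci_compl_slopeIci {c d : ℝ} (hc : 0 < c) (hcd : c * d ≤ -1) :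
    Disjoint (S • slopeIci c) (slopeIci d)ᶜ := by
  refine Set.disjoint_left.2 fun v h₁ h₂ => ?_
  rw [mem_S_smul_slopeIci] at h₁
  rw [Set.mem_compl_iff, mem_slopeIci, not_le] at h₂
  set x := v.1 0
  set y := v.1 1
  have hd : 0 ≤ -d := by nlinarith
  have hxy : 0 < -(x * y) := by nlinarith [mul_nonneg hd (sq_nonneg y)]
  nlinarith [mul_lt_mul_of_pos_left (show -d * y ^ 2 < -(x * y) by linarith) hxy,
    mul_le_mul_of_nonneg_right h₁ (mul_nonneg hd (sq_nonneg y)),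
    mul_le_mul_of_nonneg_right hcd (mul_nonneg (sq_nonneg x) (sq_nonneg y))]

theorem free_subgroup_of_hecke (w : ℝ) (hw : 2 < w) :
    Function.Injective
      (FreeGroup.lift (fun b : Bool => if b then T w else S * T w * S⁻¹)) := by
  set X := slopeIci 1
  set Y := (slopeIci (1 - w))ᶜ
  have hTY : T w • Yᶜ = X := by rw [compl_compl, T_smul_slopeIci, sub_add_cancel]
  have hTX : (T w)⁻¹ • Xᶜ = Y := by
    rw [Set.smul_set_compl, inv_smul_eq_iff.2 hTY.symm, compl_compl]
  have hXY : Disjoint X Y := Set.disjoint_compl_right_iff_subset.2 (slopeIci_anti (by linarith))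
  have hcd : 1 * (1 - w) ≤ -1 := by linarith
  refine FreeGroup.injective_lift_of_ping_pong _ (fun b => cond b X (S • X))
    (fun b => cond b Y (S • Y)) ?_ ?_ ?_ ?_ ?_ ?_
  · exact Bool.forall_bool.2 ⟨(slopeIci_nonempty 1).smul_set, slopeIci_nonempty 1⟩
  · exact pairwise_disjoint_on_bool.2 (disjoint_slopeIci_S_smul_slopeIci one_pos)
  · exact pairwise_disjoint_on_bool.2 (disjoint_compl_slopeIci_S_smul_compl_slopeIci (by linarith))
  · exact Bool.forall_bool.2
      ⟨Bool.forall_bool.2 ⟨Set.disjoint_smul_set.2 hXY,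
          disjoint_S_smul_slopeIci_compl_slopeIci one_pos hcd⟩,
        Bool.forall_bool.2 ⟨disjoint_slopeIci_S_smul_compl_slopeIci one_pos hcd, hXY⟩⟩
  · exact Bool.forall_bool.2 ⟨conj_smul_compl_subset S hTY.subset, hTY.subset⟩
  · refine Bool.forall_bool.2 ⟨?_, hTX.subset⟩
    show (S * T w * S⁻¹)⁻¹ • (S • X)ᶜ ⊆ S • Y
    rw [conj_inv]
    exact conj_smul_compl_subset S hTX.subset
end

section
/- Let λ ∈ (0,1), let z ∈ ℂ with |z| < 1, and let s ∈ ℂ with Re(s) > 0. Then the series Σ_{n=1}^∞ e^{2πinλ}·(n + z)^(−s) converges, i.e., the sequence of partial sums N ↦ Σ_{n=1}^N e^{2πinλ}·(n + z)^(−s) converges in ℂ. -/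
/-!
Dirichlet's test, in the form for coefficients of bounded variation. Since `λ ∉ ℤ`, the partial
sums of `e^{2πinλ}` are bounded by `2 / |e^{2πiλ} - 1|`. The coefficients `(n + 1 + z)^(-s)` tend
to `0`, and by the mean value theorem consecutive ones differ by `O(n^(-Re s - 1))`, a summable
bound. On the closed right half-plane `|arg u| ≤ π/2`, so `|u^c| ≤ |u|^(Re c) e^(π|Im c|/2)`, which
makes both estimates uniform in `n`.
-/

open Filter Finset Complex Topology

theorem cauchySeq_series_smul_of_tendsto_zero_of_summable_norm_sub {𝕜 E : Type*}
    [NormedDivisionRing 𝕜] [SeminormedAddCommGroup E] [Module 𝕜 E] [IsBoundedSMul 𝕜 E]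
    {f : ℕ → 𝕜} {g : ℕ → E} {b : ℝ} (hf0 : Tendsto f atTop (𝓝 0))
    (hfv : Summable fun n ↦ ‖f (n + 1) - f n‖) (hgb : ∀ n, ‖∑ i ∈ range n, g i‖ ≤ b) :
    CauchySeq fun n ↦ ∑ i ∈ range n, f i • g i := by
  rw [← cauchySeq_shift 1]
  simp_rw [Finset.sum_range_by_parts _ _ (Nat.succ _), Nat.succ_sub_succ_eq_sub, tsub_zero,
    sub_eq_add_neg]
  refine (NormedField.tendsto_zero_smul_of_tendsto_zero_of_bounded hf0
    ⟨b, eventually_map.mpr <| Eventually.of_forall fun n ↦ hgb (n + 1)⟩).cauchySeq.add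
    (CauchySeq.neg ?_)
  refine cauchySeq_range_of_norm_bounded (hfv.mul_right b).hasSum.tendsto_sum_nat.cauchySeq
    fun n ↦ ?_
  grw [norm_smul_le, hgb, sub_eq_add_neg]

theorem norm_geom_sum_le {𝕜 : Type*} [NormedDivisionRing 𝕜] {w : 𝕜} (hw : ‖w‖ ≤ 1) (hw1 : w ≠ 1)
    (n : ℕ) : ‖∑ i ∈ range n, w ^ i‖ ≤ 2 / ‖w - 1‖ := by
  rw [geom_sum_eq hw1, norm_div]
  gcongr
  calc ‖w ^ n - 1‖ ≤ ‖w ^ n‖ + ‖(1 : 𝕜)‖ := norm_sub_le _ _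
    _ ≤ 2 := by grw [norm_pow, pow_le_one₀ (norm_nonneg w) hw, norm_one]; norm_num

theorem norm_cpow_le_of_re_nonneg {u : ℂ} (hu : 0 ≤ u.re) (c : ℂ) :
    ‖u ^ c‖ ≤ ‖u‖ ^ c.re * Real.exp (Real.pi / 2 * |c.im|) := by
  have harg : |u.arg * c.im| ≤ Real.pi / 2 * |c.im| := by
    rw [abs_mul]
    exact mul_le_mul_of_nonneg_right (abs_arg_le_pi_div_two_iff.mpr hu) (abs_nonneg _)
  calc ‖u ^ c‖ ≤ ‖u‖ ^ c.re / Real.exp (u.arg * c.im) := norm_cpow_le u c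
    _ = ‖u‖ ^ c.re * Real.exp (-(u.arg * c.im)) := by rw [Real.exp_neg, div_eq_mul_inv]
    _ ≤ ‖u‖ ^ c.re * Real.exp (Real.pi / 2 * |c.im|) := by
      gcongr
      exact (neg_le_abs _).trans harg

theorem exp_two_pi_I_mul_ne_one {lam : ℝ} (hlam : lam ∈ Set.Ioo (0 : ℝ) 1) :
    cexp (2 * Real.pi * I * lam) ≠ 1 := by
  rw [Ne, exp_eq_one_iff]
  rintro ⟨k, hk⟩
  have hk : (lam : ℂ) = k := mul_left_cancel₀ two_pi_I_ne_zero (by rw [hk]; ring)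
  obtain ⟨h0, h1⟩ := hlam
  norm_cast at hk
  rw [hk] at h0 h1
  norm_cast at h0 h1
  omega

section ShiftedPower

variable {a c : ℂ}

theorem norm_ofReal_add_cpow_le (ha : 0 ≤ a.re) (hc : c.re ≤ 0) {x t : ℝ} (hx : 0 < x)
    (hxt : x ≤ t) : ‖((t : ℂ) + a) ^ c‖ ≤ x ^ c.re * Real.exp (Real.pi / 2 * |c.im|) := by
  have hre : t ≤ ((t : ℂ) + a).re := by simp only [add_re, ofReal_re]; linarith
  refine (norm_cpow_le_of_re_nonneg (by linarith) c).trans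
    (mul_le_mul_of_nonneg_right ?_ (Real.exp_pos _).le)
  exact Real.rpow_le_rpow_of_nonpos hx (hxt.trans (hre.trans (re_le_norm _))) hc

theorem norm_ofReal_add_cpow_sub_le (ha : 0 ≤ a.re) (hc : c.re ≤ 1) {x : ℝ} (hx : 0 < x) :
    ‖((x + 1 : ℝ) + a) ^ c - ((x : ℂ) + a) ^ c‖ ≤
      ‖c‖ * x ^ (c.re - 1) * Real.exp (Real.pi / 2 * |c.im|) := by
  have hderiv : ∀ t ∈ Set.Icc x (x + 1), HasDerivWithinAt (fun t : ℝ ↦ ((t : ℂ) + a) ^ c)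
      (c * ((t : ℂ) + a) ^ (c - 1)) (Set.Icc x (x + 1)) t := by
    intro t ht
    have hslit : (t : ℂ) + a ∈ slitPlane := Or.inl (by simp only [add_re, ofReal_re]; linarith [ht.1])
    have hinner : HasDerivAt (fun t : ℝ ↦ (t : ℂ) + a) 1 t :=
      (hasDerivAt_id t).ofReal_comp.add_const a
    have hcomp := (hasStrictDerivAt_cpow_const (c := c) hslit).hasDerivAt.comp t hinner
    have hpow : HasDerivAt (fun t : ℝ ↦ ((t : ℂ) + a) ^ c) (c * ((t : ℂ) + a) ^ (c - 1) * 1) t :=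
      hcomp
    simpa using hpow.hasDerivWithinAt
  have hbound : ∀ t ∈ Set.Icc x (x + 1),
      ‖c * ((t : ℂ) + a) ^ (c - 1)‖ ≤ ‖c‖ * x ^ (c.re - 1) * Real.exp (Real.pi / 2 * |c.im|) := by
    intro t ht
    rw [norm_mul, mul_assoc]
    gcongr
    simpa using norm_ofReal_add_cpow_le ha (by simpa using hc) hx ht.1 (c := c - 1)
  simpa using (convex_Icc x (x + 1)).norm_image_sub_le_of_norm_hasDerivWithin_le hderiv hbound
    (Set.left_mem_Icc.2 (by linarith)) (Set.right_mem_Icc.2 (by linarith))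

theorem tendsto_natCast_add_cpow_atTop_zero (ha : 0 ≤ a.re) (hc : c.re < 0) :
    Tendsto (fun n : ℕ ↦ ((n : ℂ) + a) ^ c) atTop (𝓝 0) := by
  rw [tendsto_zero_iff_norm_tendsto_zero]
  have hlim : Tendsto (fun n : ℕ ↦ (n : ℝ) ^ c.re * Real.exp (Real.pi / 2 * |c.im|)) atTop
      (𝓝 0) := by
    simpa using ((tendsto_rpow_neg_atTop (neg_pos.2 hc)).comp tendsto_natCast_atTop_atTop).mul_const
      (Real.exp (Real.pi / 2 * |c.im|))
  refine squeeze_zero' (Eventually.of_forall fun n ↦ norm_nonneg _) ?_ hlim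
  filter_upwards [eventually_ge_atTop 1] with n hn
  simpa using norm_ofReal_add_cpow_le ha hc.le (Nat.cast_pos.2 hn) le_rfl

theorem summable_norm_natCast_add_cpow_sub (ha : 0 ≤ a.re) (hc : c.re < 0) :
    Summable fun n : ℕ ↦ ‖(((n + 1 : ℕ) : ℂ) + a) ^ c - ((n : ℂ) + a) ^ c‖ := by
  rw [← summable_nat_add_iff 1]
  have hmajorant : Summable fun n : ℕ ↦
      ‖c‖ * ((n + 1 : ℕ) : ℝ) ^ (c.re - 1) * Real.exp (Real.pi / 2 * |c.im|) :=
    (((summable_nat_add_iff 1).2 (Real.summable_nat_rpow.2 (by linarith))).mul_left _).mul_right _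
  refine hmajorant.of_nonneg_of_le (fun n ↦ norm_nonneg _) fun n ↦ ?_
  simpa using norm_ofReal_add_cpow_sub_le ha (by linarith) (Nat.cast_pos.2 n.succ_pos)

end ShiftedPower

theorem lerch_series_converges (lam : ℝ) (hlam : lam ∈ Set.Ioo (0 : ℝ) 1)
    (z : ℂ) (hz : ‖z‖ < 1) (s : ℂ) (hs : 0 < s.re) :
    ∃ L : ℂ, Filter.Tendsto
      (fun N : ℕ => ∑ n ∈ Finset.range N,
        Complex.exp (2 * Real.pi * Complex.I * ((n : ℂ) + 1) * lam) *
          (((n : ℂ) + 1) + z) ^ (-s))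
      Filter.atTop (nhds L) := by
  set w := cexp (2 * Real.pi * I * lam) with hw_def
  have hterm (n : ℕ) : cexp (2 * Real.pi * I * ((n : ℂ) + 1) * lam) * (((n : ℂ) + 1) + z) ^ (-s)
      = ((n : ℂ) + (1 + z)) ^ (-s) • w ^ (n + 1) := by
    rw [smul_eq_mul, mul_comm, add_assoc, ← exp_nat_mul]
    push_cast
    ring_nf
  have ha : 0 ≤ (1 + z).re := by
    have := neg_le_of_abs_le ((abs_re_le_norm z).trans hz.le)
    simp only [add_re, one_re]
    linarith
  have hw : ‖w‖ = 1 := by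
    rw [hw_def, show 2 * Real.pi * I * lam = ((2 * Real.pi * lam : ℝ) : ℂ) * I by push_cast; ring]
    exact norm_exp_ofReal_mul_I _
  have hpartial (n : ℕ) : ‖∑ i ∈ range n, w ^ (i + 1)‖ ≤ 2 / ‖w - 1‖ := by
    simpa [pow_succ', ← mul_sum, hw] using norm_geom_sum_le hw.le (exp_two_pi_I_mul_ne_one hlam) n
  simp_rw [hterm]
  exact cauchySeq_tendsto_of_complete <| cauchySeq_series_smul_of_tendsto_zero_of_summable_norm_sub
    (tendsto_natCast_add_cpow_atTop_zero ha (by simpa using hs))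
    (summable_norm_natCast_add_cpow_sub ha (by simpa using hs)) hpartial
end

section
/- Let λ ∈ (0,1), let 0 < r < 1, and let σ > 0. Then there exist constants C > 0 and α > 0 such that for all s = σ + it with |t| ≥ 1 and all z = x + iy with |z| ≤ r, the Lerch zeta function H(z, s, λ) (given by its convergent series) satisfies |H(z, s, λ)| ≤ C·|t|^α·exp( (2/(1−r))·|y|·|s|·log(1 + |s|) ). -/
open Complex Finset

/-!
Since `λ ∉ ℤ`, the partial sums of `e^{2πinλ}` are bounded by `2 / |e^{2πiλ} - 1|`, so Abel
summation bounds the Lerch series by that constant times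
`sup |(n + z)^{-s}| + Σ |(n + 1 + z)^{-s} - (n + z)^{-s}|`.
For `Re w > 0` one has `|arg w| ≤ |Im w| / Re w`, whence
`|(n + z)^{-s}| ≤ (n - r)^{-σ} e^{|y||t|/(1-r)}`, and by the mean value theorem the differences
are at most `|s| (n - r)^{-σ-1} e^{|y||t|/(1-r)}`, a summable bound. Altogether
`|H| ≤ C |t| e^{|y||t|/(1-r)}`, and `|t| ≤ |s| ≤ 2 |s| log (1 + |s|)` because `|s| ≥ 1`.
-/

theorem Complex.abs_arg_le_abs_im_div_re {w : ℂ} (hw : 0 < w.re) :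
    |w.arg| ≤ |w.im| / w.re := by
  have hlt : |w.arg| < Real.pi / 2 := abs_arg_lt_pi_div_two_iff.2 (Or.inl hw)
  have htan : Real.tan |w.arg| ≤ |w.im / w.re| := by
    rcases abs_choice w.arg with h | h <;> rw [h]
    · rw [tan_arg]; exact le_abs_self _
    · rw [Real.tan_neg, tan_arg]; exact neg_le_abs _
  rw [abs_div, abs_of_pos hw] at htan
  exact (Real.le_tan (abs_nonneg _) hlt).trans htan

theorem Complex.norm_cpow_neg_le {w s : ℂ} (hw : 0 < w.re) (hs : 0 ≤ s.re) :
    ‖w ^ (-s)‖ ≤ w.re ^ (-s.re) * Real.exp (|w.im| * |s.im| / w.re) := by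
  have hw0 : w ≠ 0 := fun h ↦ by simp [h] at hw
  rw [norm_cpow_of_ne_zero hw0, neg_re, neg_im, mul_neg, Real.exp_neg, div_inv_eq_mul]
  refine mul_le_mul (Real.rpow_le_rpow_of_nonpos hw (re_le_norm w) (neg_nonpos.2 hs))
    (Real.exp_le_exp.2 ?_) (by positivity) (by positivity)
  calc w.arg * s.im ≤ |w.arg| * |s.im| := by rw [← abs_mul]; exact le_abs_self _
    _ ≤ |w.im| / w.re * |s.im| := by gcongr; exact abs_arg_le_abs_im_div_re hw
    _ = |w.im| * |s.im| / w.re := div_mul_eq_mul_div _ _ _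

lemma sub_le_re_ofReal_add {r u : ℝ} {z : ℂ} (hz : ‖z‖ ≤ r) : u - r ≤ ((u : ℂ) + z).re := by
  have := neg_abs_le z.re
  have := abs_re_le_norm z
  simp only [add_re, ofReal_re]
  linarith

lemma norm_ofReal_add_cpow_neg_le {r u : ℝ} {z s : ℂ} (hr : r < 1) (hz : ‖z‖ ≤ r)
    (hu : 1 ≤ u) (hs : 0 ≤ s.re) :
    ‖((u : ℂ) + z) ^ (-s)‖ ≤ (u - r) ^ (-s.re) * Real.exp (|z.im| * |s.im| / (1 - r)) := by
  have hre := sub_le_re_ofReal_add (u := u) hz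
  have hur : 0 < u - r := by linarith
  refine (norm_cpow_neg_le (hur.trans_le hre) hs).trans ?_
  rw [add_im, ofReal_im, zero_add]
  refine mul_le_mul (Real.rpow_le_rpow_of_nonpos hur hre (neg_nonpos.2 hs))
    (Real.exp_le_exp.2 ?_) (by positivity) (by positivity)
  gcongr
  linarith

lemma norm_ofReal_add_one_cpow_neg_sub_le {r u : ℝ} {z s : ℂ} (hr : r < 1) (hz : ‖z‖ ≤ r)
    (hu : 1 ≤ u) (hs : 0 ≤ s.re) :
    ‖((u : ℂ) + 1 + z) ^ (-s) - ((u : ℂ) + z) ^ (-s)‖ ≤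
      ‖s‖ * (u - r) ^ (-(s.re + 1)) * Real.exp (|z.im| * |s.im| / (1 - r)) := by
  have hderiv : ∀ v ∈ Set.Icc u (u + 1),
      HasDerivWithinAt (fun v : ℝ ↦ ((v : ℂ) + z) ^ (-s))
        (-s * ((v : ℂ) + z) ^ (-s - 1)) (Set.Icc u (u + 1)) v := by
    intro v hv
    have hslit : (v : ℂ) + z ∈ slitPlane :=
      Or.inl (by linarith [sub_le_re_ofReal_add (u := v) hz, hv.1])
    simpa using (((hasDerivAt_id (v : ℂ)).add_const z).cpow_const (c := -s) hslit).comp_ofReal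
      |>.hasDerivWithinAt
  have hbound : ∀ v ∈ Set.Icc u (u + 1), ‖-s * ((v : ℂ) + z) ^ (-s - 1)‖ ≤
      ‖s‖ * (u - r) ^ (-(s.re + 1)) * Real.exp (|z.im| * |s.im| / (1 - r)) := by
    intro v hv
    have h := norm_ofReal_add_cpow_neg_le (s := s + 1) hr hz (hu.trans hv.1)
      (by simp only [add_re, one_re]; linarith)
    rw [add_re, one_re, add_im, one_im, add_zero, neg_add'] at h
    rw [norm_mul, norm_neg, mul_assoc]
    refine mul_le_mul_of_nonneg_left (h.trans (mul_le_mul_of_nonneg_right ?_ (by positivity)))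
      (norm_nonneg s)
    exact Real.rpow_le_rpow_of_nonpos (by linarith) (by linarith [hv.1]) (by linarith)
  have hmvt := (convex_Icc u (u + 1)).norm_image_sub_le_of_norm_hasDerivWithin_le hderiv hbound
    ⟨le_rfl, by linarith⟩ ⟨by linarith, le_rfl⟩
  simpa using hmvt

theorem norm_sum_range_smul_le_of_bounded_partial_sums {R E : Type*} [SeminormedRing R]
    [SeminormedAddCommGroup E] [Module R E] [IsBoundedSMul R E] {f : ℕ → R} {g : ℕ → E}
    {M A : ℝ} {d : ℕ → ℝ} (hg : ∀ m, ‖∑ j ∈ range m, g j‖ ≤ M) (hf : ∀ n, ‖f n‖ ≤ A)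
    (hd : ∀ n, ‖f (n + 1) - f n‖ ≤ d n) (hds : Summable d) (n : ℕ) :
    ‖∑ i ∈ range n, f i • g i‖ ≤ M * (A + ∑' i, d i) := by
  have hM : 0 ≤ M := by simpa using hg 0
  have hA : 0 ≤ A := (norm_nonneg _).trans (hf 0)
  have hd0 : ∀ i, 0 ≤ d i := fun i ↦ (norm_nonneg _).trans (hd i)
  rw [sum_range_by_parts]
  calc _ ≤ ‖f (n - 1) • ∑ j ∈ range n, g j‖ +
        ‖∑ i ∈ range (n - 1), (f (i + 1) - f i) • ∑ j ∈ range (i + 1), g j‖ := norm_sub_le _ _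
    _ ≤ A * M + ∑ i ∈ range (n - 1), d i * M := by
        gcongr
        · exact (norm_smul_le _ _).trans (mul_le_mul (hf _) (hg _) (norm_nonneg _) hA)
        · refine (norm_sum_le _ _).trans (sum_le_sum fun i _ ↦ ?_)
          exact (norm_smul_le _ _).trans (mul_le_mul (hd i) (hg _) (norm_nonneg _) (hd0 i))
    _ = M * (A + ∑ i ∈ range (n - 1), d i) := by rw [← sum_mul]; ring
    _ ≤ M * (A + ∑' i, d i) := by gcongr; exact hds.sum_le_tsum _ fun i _ ↦ hd0 i

lemma norm_geom_sum_le_s8 {K : Type*} [NormedField K] {e : K} (he : ‖e‖ ≤ 1) (he1 : e ≠ 1)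
    (n : ℕ) : ‖∑ j ∈ range n, e ^ j‖ ≤ 2 / ‖e - 1‖ := by
  rw [geom_sum_eq he1, norm_div]
  gcongr
  calc ‖e ^ n - 1‖ ≤ ‖e ^ n‖ + ‖(1 : K)‖ := norm_sub_le _ _
    _ ≤ 1 + 1 := by rw [norm_pow, norm_one]; gcongr; exact pow_le_one₀ (norm_nonneg e) he
    _ = 2 := one_add_one_eq_two

lemma Complex.exp_two_pi_mul_I_mul_ne_one {x : ℝ} (hx : x ∈ Set.Ioo 0 1) :
    exp (2 * Real.pi * I * x) ≠ 1 := by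
  rw [Ne, exp_eq_one_iff]
  rintro ⟨n, hn⟩
  have hxn : (x : ℂ) = (n : ℝ) := by
    push_cast
    exact mul_left_cancel₀ (by simp [Real.pi_ne_zero]) (hn.trans (mul_comm _ _))
  rw [ofReal_inj] at hxn
  have h0 : (0 : ℤ) < n := by exact_mod_cast hxn ▸ hx.1
  have h1 : n < 1 := by exact_mod_cast hxn ▸ hx.2
  omega

lemma norm_sum_range_exp_two_pi_mul_I_le {lam : ℝ} (hlam : lam ∈ Set.Ioo 0 1) (m : ℕ) :
    ‖∑ j ∈ range m, exp (2 * Real.pi * I * ((j : ℂ) + 1) * lam)‖ ≤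
      2 / ‖exp (2 * Real.pi * I * lam) - 1‖ := by
  have he : ‖exp (2 * Real.pi * I * lam)‖ = 1 := by
    rw [show 2 * Real.pi * I * lam = ((2 * Real.pi * lam : ℝ) : ℂ) * I by push_cast; ring]
    exact norm_exp_ofReal_mul_I _
  have hpow : ∀ j : ℕ, exp (2 * Real.pi * I * ((j : ℂ) + 1) * lam) =
      exp (2 * Real.pi * I * lam) ^ j * exp (2 * Real.pi * I * lam) := by
    intro j
    rw [← pow_succ, ← exp_nat_mul]
    push_cast
    ring_nf
  simp_rw [hpow, ← sum_mul, norm_mul, he, mul_one]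
  exact norm_geom_sum_le_s8 he.le (exp_two_pi_mul_I_mul_ne_one hlam) m

lemma summable_nat_add_rpow_neg {a p : ℝ} (ha : 0 < a) (hp : 1 < p) :
    Summable fun n : ℕ ↦ ((n : ℝ) + a) ^ (-p) :=
  ((Real.summable_one_div_nat_add_rpow a p).2 hp).congr fun n ↦ by
    rw [abs_of_pos (by positivity), Real.rpow_neg (by positivity), one_div]

lemma le_two_mul_mul_log_one_add {x : ℝ} (hx : 1 ≤ x) : x ≤ 2 * x * Real.log (1 + x) := by
  have hlog : Real.log 2 ≤ Real.log (1 + x) := Real.log_le_log two_pos (by linarith)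
  nlinarith [Real.log_two_gt_d9]

lemma norm_lerch_partial_sum_le {lam r : ℝ} (hlam : lam ∈ Set.Ioo 0 1) (hr : r < 1) {z s : ℂ}
    (hz : ‖z‖ ≤ r) (hs : 0 < s.re) (N : ℕ) :
    ‖∑ n ∈ range N, exp (2 * Real.pi * I * ((n : ℂ) + 1) * lam) * (((n : ℂ) + 1) + z) ^ (-s)‖ ≤
      2 / ‖exp (2 * Real.pi * I * lam) - 1‖ *
        ((1 - r) ^ (-s.re) + ‖s‖ * ∑' n : ℕ, ((n : ℝ) + (1 - r)) ^ (-(s.re + 1))) *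
        Real.exp (|z.im| * |s.im| / (1 - r)) := by
  set e := exp (2 * Real.pi * I * lam)
  set E := Real.exp (|z.im| * |s.im| / (1 - r))
  have h1r : 0 < 1 - r := by linarith
  have hterm : ∀ n : ℕ, ‖((n : ℂ) + 1 + z) ^ (-s)‖ ≤ (1 - r) ^ (-s.re) * E := by
    intro n
    have h := norm_ofReal_add_cpow_neg_le (u := n + 1) hr hz (by simp) hs.le
    push_cast at h
    refine h.trans (mul_le_mul_of_nonneg_right ?_ (by positivity))
    exact Real.rpow_le_rpow_of_nonpos h1r (by simp) (by linarith)
  have hdiff : ∀ n : ℕ, ‖(((n + 1 : ℕ) : ℂ) + 1 + z) ^ (-s) - ((n : ℂ) + 1 + z) ^ (-s)‖ ≤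
      ‖s‖ * ((n : ℝ) + (1 - r)) ^ (-(s.re + 1)) * E := by
    intro n
    have h := norm_ofReal_add_one_cpow_neg_sub_le (u := n + 1) hr hz (by simp) hs.le
    push_cast at h ⊢
    rwa [add_sub_assoc] at h
  have hsum :=
    ((summable_nat_add_rpow_neg h1r (p := s.re + 1) (by linarith)).mul_left ‖s‖).mul_right E
  simp_rw [mul_comm (exp _), ← smul_eq_mul]
  calc _ ≤ 2 / ‖e - 1‖ * ((1 - r) ^ (-s.re) * E +
        ∑' n : ℕ, ‖s‖ * ((n : ℝ) + (1 - r)) ^ (-(s.re + 1)) * E) :=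
        norm_sum_range_smul_le_of_bounded_partial_sums
          (norm_sum_range_exp_two_pi_mul_I_le hlam) hterm hdiff hsum N
    _ = _ := by rw [tsum_mul_right, tsum_mul_left]; ring

theorem lerch_growth_bound_general (lam : ℝ) (hlam : lam ∈ Set.Ioo (0 : ℝ) 1)
    (r : ℝ) (hr1 : r < 1) (σ : ℝ) (hσ : 0 < σ) :
    ∃ C > (0 : ℝ), ∃ α > (0 : ℝ), ∀ t x y : ℝ, 1 ≤ |t| →
      ∀ z : ℂ, z = (x : ℂ) + (y : ℂ) * Complex.I → ‖z‖ ≤ r →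
      ∀ s : ℂ, s = (σ : ℂ) + (t : ℂ) * Complex.I →
      ∀ L : ℂ,
        Filter.Tendsto
          (fun N : ℕ => ∑ n ∈ Finset.range N,
            Complex.exp (2 * Real.pi * Complex.I * ((n : ℂ) + 1) * lam) *
              (((n : ℂ) + 1) + z) ^ (-s))
          Filter.atTop (nhds L) →
        ‖L‖ ≤ C * |t| ^ α *
          Real.exp (2 / (1 - r) * |y| * ‖s‖ * Real.log (1 + ‖s‖)) := by
  set M := 2 / ‖exp (2 * Real.pi * I * lam) - 1‖
  set K := ∑' n : ℕ, ((n : ℝ) + (1 - r)) ^ (-(σ + 1))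
  have h1r : 0 < 1 - r := by linarith
  have hM : 0 < M :=
    div_pos two_pos (norm_pos_iff.2 (sub_ne_zero.2 (exp_two_pi_mul_I_mul_ne_one hlam)))
  have hK : 0 ≤ K := tsum_nonneg fun n ↦ by positivity
  refine ⟨M * ((1 - r) ^ (-σ) + (σ + 1) * K), by positivity, 1, one_pos, ?_⟩
  intro t x y ht z hzxy hz s hs L hL
  have hsre : s.re = σ := by simp [hs]
  have hsim : s.im = t := by simp [hs]
  have hzim : z.im = y := by simp [hzxy]
  have hts : |t| ≤ ‖s‖ := hsim ▸ abs_im_le_norm s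
  have hsσ : ‖s‖ ≤ (σ + 1) * |t| := by
    have : ‖s‖ ≤ σ + |t| := by simpa [hs, abs_of_pos hσ] using norm_add_le (σ : ℂ) (t * I)
    nlinarith
  have hLbound : ‖L‖ ≤ M * ((1 - r) ^ (-σ) + ‖s‖ * K) * Real.exp (|y| * |t| / (1 - r)) := by
    refine le_of_tendsto' hL.norm fun N ↦ ?_
    have h := norm_lerch_partial_sum_le hlam hr1 hz (hsre ▸ hσ) N
    rwa [hsre, hsim, hzim] at h
  refine hLbound.trans (mul_le_mul ?_ ?_ (by positivity) (by positivity))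
  · calc M * ((1 - r) ^ (-σ) + ‖s‖ * K) ≤ M * ((1 - r) ^ (-σ) * |t| + (σ + 1) * |t| * K) := by
          gcongr
          exact le_mul_of_one_le_right (by positivity) ht
      _ = _ := by rw [Real.rpow_one]; ring
  · have hlog := le_two_mul_mul_log_one_add (ht.trans hts)
    rw [Real.exp_le_exp]
    calc |y| * |t| / (1 - r) ≤ |y| * (2 * ‖s‖ * Real.log (1 + ‖s‖)) / (1 - r) := by gcongr; linarith
      _ = _ := by ring

theorem lerch_growth_bound (lam : ℝ) (hlam : lam ∈ Set.Ioo (0 : ℝ) 1)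
    (r : ℝ) (hr0 : 0 < r) (hr1 : r < 1) (σ : ℝ) (hσ : 0 < σ) :
    ∃ C > (0 : ℝ), ∃ α > (0 : ℝ), ∀ t x y : ℝ, 1 ≤ |t| →
      ∀ z : ℂ, z = (x : ℂ) + (y : ℂ) * Complex.I → ‖z‖ ≤ r →
      ∀ s : ℂ, s = (σ : ℂ) + (t : ℂ) * Complex.I →
      ∀ L : ℂ,
        Filter.Tendsto
          (fun N : ℕ => ∑ n ∈ Finset.range N,
            Complex.exp (2 * Real.pi * Complex.I * ((n : ℂ) + 1) * lam) *
              (((n : ℂ) + 1) + z) ^ (-s))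
          Filter.atTop (nhds L) →
        ‖L‖ ≤ C * |t| ^ α *
          Real.exp (2 / (1 - r) * |y| * ‖s‖ * Real.log (1 + ‖s‖)) :=
  lerch_growth_bound_general lam hlam r hr1 σ hσ
end

section
/- Let δ ∈ (0,1) and let A, C₁, C₃ > 0. Then there exist constants C > 0 and h₀ ∈ (0,1) such that for all h ∈ (0, h₀): Σ_{k=0}^∞ log(1 + C₁·h^(−A)·exp(−C₃·h^δ·k)) ≤ C·h^(−δ)·(log h)². -/
/-!
Split the sum at `N ≈ log (1 + a) / b`, where `a = C₁ h^(-A)` and `b = C₃ h^δ`: each of the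
first `N` terms is at most `log (1 + a) = O(|log h|)`, while the remaining ones are dominated by
the geometric series `∑ a e^(-b (N + k)) ≤ (1 - e^(-b))⁻¹ ≤ 1 + 1/b`. Since
`N = O(h^(-δ) |log h|)` and `1/b = O(h^(-δ))`, the total is `O(h^(-δ) (log h)²)`.
-/

namespace Real

lemma log_one_add_le_self {x : ℝ} (hx : 0 ≤ x) : log (1 + x) ≤ x := by
  simpa using log_le_sub_one_of_pos (by linarith : 0 < 1 + x)

lemma inv_one_sub_exp_neg_le {b : ℝ} (hb : 0 < b) : (1 - exp (-b))⁻¹ ≤ 1 + b⁻¹ := by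
  have hexp : exp (-b) ≤ (1 + b)⁻¹ := by
    rw [exp_neg]
    exact inv_anti₀ (by positivity) (by linarith [add_one_le_exp b])
  have hgap : b / (1 + b) ≤ 1 - exp (-b) := by
    have : b / (1 + b) = 1 - (1 + b)⁻¹ := by field_simp; ring
    linarith
  calc (1 - exp (-b))⁻¹ ≤ (b / (1 + b))⁻¹ := inv_anti₀ (by positivity) hgap
    _ = 1 + b⁻¹ := by field_simp; ring

lemma exp_neg_mul_natCast (b : ℝ) (k : ℕ) : exp (-b * k) = exp (-b) ^ k := by
  rw [mul_comm, exp_nat_mul]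

lemma log_one_add_mul_rpow_neg_le {c A h : ℝ} (hc : 0 ≤ c) (hA : 0 ≤ A) (hh0 : 0 < h)
    (hh1 : h ≤ 1) : log (1 + c * h ^ (-A)) ≤ log (1 + c) - A * log h := by
  have hpow : 1 ≤ h ^ (-A) := one_le_rpow_of_pos_of_le_one_of_nonpos hh0 hh1 (neg_nonpos.mpr hA)
  calc log (1 + c * h ^ (-A)) ≤ log ((1 + c) * h ^ (-A)) :=
        log_le_log (by positivity) (by nlinarith)
    _ = log (1 + c) - A * log h := by
        rw [log_mul (by positivity) (by positivity), log_rpow hh0]; ring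

section LogOneAddMulExp

variable {a b : ℝ}

lemma summable_log_one_add_mul_exp_neg_mul (hb : 0 < b) :
    Summable fun k : ℕ => log (1 + a * exp (-b * k)) := by
  refine summable_log_one_add_of_summable (Summable.mul_left a ?_)
  simp only [exp_neg_mul_natCast]
  exact summable_geometric_of_lt_one (exp_nonneg _) (exp_lt_one_iff.mpr (neg_lt_zero.mpr hb))

lemma tsum_log_one_add_mul_exp_neg_mul_le (ha : 0 < a) (hb : 0 < b) {N : ℕ}
    (hN : log a ≤ b * N) :
    ∑' k : ℕ, log (1 + a * exp (-b * k)) ≤ N * log (1 + a) + (1 + b⁻¹) := by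
  set r := exp (-b)
  have hr1 : r < 1 := exp_lt_one_iff.mpr (neg_lt_zero.mpr hb)
  simp only [exp_neg_mul_natCast]
  have hsum : Summable fun k : ℕ => log (1 + a * r ^ k) := by
    simpa only [exp_neg_mul_natCast] using summable_log_one_add_mul_exp_neg_mul (a := a) hb
  have hhead : ∑ k ∈ Finset.range N, log (1 + a * r ^ k) ≤ N * log (1 + a) := by
    have hle (k : ℕ) : a * r ^ k ≤ a :=
      mul_le_of_le_one_right ha.le (pow_le_one₀ (exp_nonneg _) hr1.le)
    simpa using Finset.sum_le_card_nsmul (Finset.range N) _ _ fun k _ =>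
      log_le_log (by positivity) (by linarith [hle k])
  have hsmall : a * r ^ N ≤ 1 := by
    rw [← exp_log ha, ← exp_neg_mul_natCast, ← exp_add]
    exact exp_le_one_iff.mpr (by linarith)
  have hgeom : Summable fun k : ℕ => a * r ^ N * r ^ k :=
    (summable_geometric_of_lt_one (exp_nonneg _) hr1).mul_left _
  have htail : ∑' k : ℕ, log (1 + a * r ^ (k + N)) ≤ 1 + b⁻¹ :=
    calc ∑' k : ℕ, log (1 + a * r ^ (k + N))
        ≤ ∑' k : ℕ, a * r ^ N * r ^ k := by
          refine (hsum.comp_injective (add_left_injective N)).tsum_le_tsum (fun k => ?_) hgeom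
          rw [pow_add, mul_comm (r ^ k), ← mul_assoc]
          exact log_one_add_le_self (by positivity)
      _ = a * r ^ N * (1 - r)⁻¹ := by
          rw [tsum_mul_left, tsum_geometric_of_lt_one (exp_nonneg _) hr1]
      _ ≤ (1 - r)⁻¹ := mul_le_of_le_one_left (inv_nonneg.mpr (sub_nonneg.mpr hr1.le)) hsmall
      _ ≤ 1 + b⁻¹ := inv_one_sub_exp_neg_le hb
  rw [← hsum.sum_add_tsum_nat_add N]
  exact add_le_add hhead htail

lemma tsum_log_one_add_mul_exp_neg_mul_le_of_log_le (ha : 0 < a) (hb : 0 < b) {M : ℝ}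
    (hM : log (1 + a) ≤ M) :
    ∑' k : ℕ, log (1 + a * exp (-b * k)) ≤ (M * b⁻¹ + 1) * M + (1 + b⁻¹) := by
  have hlog_nonneg : 0 ≤ log (1 + a) := log_nonneg (by linarith)
  have hMb : 0 ≤ M * b⁻¹ := mul_nonneg (hlog_nonneg.trans hM) (inv_nonneg.mpr hb.le)
  have hN : log a ≤ b * ⌈M * b⁻¹⌉₊ :=
    calc log a ≤ log (1 + a) := log_le_log ha (by linarith)
      _ ≤ M := hM
      _ = b * (M * b⁻¹) := by field_simp
      _ ≤ b * ⌈M * b⁻¹⌉₊ := by gcongr; exact Nat.le_ceil _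
  refine (tsum_log_one_add_mul_exp_neg_mul_le ha hb hN).trans (add_le_add_left ?_ _)
  exact mul_le_mul (Nat.ceil_lt_add_one hMb).le hM hlog_nonneg (by linarith)

end LogOneAddMulExp

end Real

open Real

theorem weyl_sum_estimate_general (δ A C₁ C₃ : ℝ) (hδ0 : 0 < δ)
    (hA : 0 < A) (hC₁ : 0 < C₁) (hC₃ : 0 < C₃) :
    ∃ C > (0 : ℝ), ∃ h₀ : ℝ, 0 < h₀ ∧ h₀ < 1 ∧ ∀ h : ℝ, 0 < h → h < h₀ →
      Summable (fun k : ℕ =>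
        Real.log (1 + C₁ * h ^ (-A) * Real.exp (-C₃ * h ^ δ * (k : ℝ)))) ∧
      ∑' k : ℕ, Real.log (1 + C₁ * h ^ (-A) * Real.exp (-C₃ * h ^ δ * (k : ℝ))) ≤
        C * h ^ (-δ) * (Real.log h) ^ 2 := by
  set K := log (1 + C₁) + A
  have hK : 0 ≤ K := add_nonneg (log_nonneg (by linarith)) hA.le
  refine ⟨K ^ 2 / C₃ + K + 1 + 1 / C₃, by positivity, exp (-1), exp_pos _,
    exp_lt_one_iff.mpr (by norm_num), fun h hh0 hh1 => ?_⟩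
  set L := -log h
  have hL : 1 ≤ L := by linarith [(log_lt_log hh0 hh1).trans_eq (log_exp _)]
  have hh1' : h ≤ 1 := hh1.le.trans (exp_le_one_iff.mpr (by norm_num))
  set X := h ^ (-δ)
  have hX : 1 ≤ X := one_le_rpow_of_pos_of_le_one_of_nonpos hh0 hh1' (neg_nonpos.mpr hδ0.le)
  have hb_inv : (C₃ * h ^ δ)⁻¹ = X / C₃ := by
    rw [mul_inv, ← rpow_neg hh0.le, div_eq_inv_mul]
  have hlog : log (1 + C₁ * h ^ (-A)) ≤ K * L := by
    have := log_one_add_mul_rpow_neg_le hC₁.le hA.le hh0 hh1'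
    nlinarith [log_nonneg (by linarith : (1 : ℝ) ≤ 1 + C₁)]
  have hbound := tsum_log_one_add_mul_exp_neg_mul_le_of_log_le (b := C₃ * h ^ δ)
    (by positivity) (by positivity) hlog
  have hsum := summable_log_one_add_mul_exp_neg_mul (a := C₁ * h ^ (-A)) (b := C₃ * h ^ δ)
    (by positivity)
  simp only [neg_mul, hb_inv] at hsum hbound ⊢
  refine ⟨hsum, hbound.trans ?_⟩
  have hL2 : 1 ≤ L ^ 2 := one_le_pow₀ hL
  have hKL : K * L ≤ K * X * L ^ 2 := by
    rw [mul_assoc]; gcongr; nlinarith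
  have hXL : 1 ≤ X * L ^ 2 := one_le_mul_of_one_le_of_one_le hX hL2
  have hXC : X / C₃ ≤ X / C₃ * L ^ 2 := le_mul_of_one_le_right (by positivity) hL2
  rw [← neg_sq]
  linear_combination hKL + hXL + hXC

theorem weyl_sum_estimate (δ A C₁ C₃ : ℝ) (hδ0 : 0 < δ) (hδ1 : δ < 1)
    (hA : 0 < A) (hC₁ : 0 < C₁) (hC₃ : 0 < C₃) :
    ∃ C > (0 : ℝ), ∃ h₀ : ℝ, 0 < h₀ ∧ h₀ < 1 ∧ ∀ h : ℝ, 0 < h → h < h₀ →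
      Summable (fun k : ℕ =>
        Real.log (1 + C₁ * h ^ (-A) * Real.exp (-C₃ * h ^ δ * (k : ℝ)))) ∧
      ∑' k : ℕ, Real.log (1 + C₁ * h ^ (-A) * Real.exp (-C₃ * h ^ δ * (k : ℝ))) ≤
        C * h ^ (-δ) * (Real.log h) ^ 2 :=
  weyl_sum_estimate_general δ A C₁ C₃ hδ0 hA hC₁ hC₃
end

section
/- Let w > 2, let r ∈ (1/(w−1), 1), and let f : ℂ → ℂ be holomorphic on the open ball B(0, r). Define g : ℂ → ℂ by g(u) := (f(u) − f(0))/u for u ≠ 0 and g(0) := f'(0). Then g is holomorphic on B(0, r), and for all s ∈ ℂ with Re(s) > 1/2 and all z ∈ ℂ with |z| < 1, each of the following three families indexed by n ∈ ℤ \ {0} is absolutely summable and the identity holds: Σ_{n≠0} ((z + n·w)²)^(−s)·f(−1/(z + n·w)) = f(0)·Σ_{n≠0} ((z + n·w)²)^(−s) − Σ_{n≠0} ((z + n·w)²)^(−s)·(z + n·w)^(−1)·g(−1/(z + n·w)). -/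
/-!
Writing `f u = f 0 + u g(u)` at `u = -1/(z + n w)` gives the identity termwise, so everything
reduces to absolute convergence. The points `z + n w` satisfy `‖z + n w‖ ≥ |n| (w - 1)`, so
`‖((z + n w)²)^(-s)‖ ≤ e^{π |Im s|} ((w - 1)|n|)^{-2 Re s}`, summable for `Re s > 1/2`; and
`-1/(z + n w)` stays in the compact ball of radius `1/(w - 1)` inside `B(0, r)`, where `f` and
`g = dslope f 0` are bounded.
-/

open Complex Real

theorem Complex.norm_cpow_le_rpow_mul_exp (u t : ℂ) :
    ‖u ^ t‖ ≤ ‖u‖ ^ t.re * Real.exp (π * |t.im|) := by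
  refine (norm_cpow_le u t).trans ?_
  rw [div_eq_mul_inv, ← Real.exp_neg]
  gcongr
  calc -(arg u * t.im) ≤ |arg u| * |t.im| := by rw [← abs_mul]; exact neg_le_abs _
    _ ≤ π * |t.im| := by gcongr; exact abs_arg_le_pi u

theorem Summable.norm_mul_of_norm_le {R ι : Type*} [NormedRing R] {a b : ι → R} {C : ℝ}
    (ha : Summable fun i => ‖a i‖) (hb : ∀ i, ‖b i‖ ≤ C) :
    Summable fun i => ‖a i * b i‖ :=
  .of_nonneg_of_le (fun _ => norm_nonneg _)
    (fun i => (norm_mul_le _ _).trans (mul_le_mul_of_nonneg_left (hb i) (norm_nonneg _)))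
    (ha.mul_right C)

theorem eq_dslope_zero_of_eq_div {f g : ℂ → ℂ} (hg0 : g 0 = deriv f 0)
    (hg : ∀ u : ℂ, u ≠ 0 → g u = (f u - f 0) / u) : g = dslope f 0 := by
  funext u
  rcases eq_or_ne u 0 with rfl | hu
  · rw [hg0, dslope_same]
  · rw [hg u hu, dslope_of_ne f hu, slope_def_field, sub_zero]

section Lattice

variable {w : ℝ} {z : ℂ}

theorem abs_mul_sub_one_le_norm_add_intCast_mul (hw : 0 ≤ w) (hz : ‖z‖ ≤ 1) {n : ℤ}
    (hn : n ≠ 0) : |(n : ℝ)| * (w - 1) ≤ ‖z + n * w‖ := by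
  have hn1 : (1 : ℝ) ≤ |(n : ℝ)| := by exact_mod_cast Int.one_le_abs hn
  have hnw : ‖(n : ℂ) * w‖ = |(n : ℝ)| * w := by
    rw [norm_mul, norm_intCast, norm_real, Real.norm_of_nonneg hw]
  have := norm_sub_norm_le ((n : ℂ) * w) (-z)
  rw [sub_neg_eq_add, add_comm, norm_neg, hnw] at this
  nlinarith

theorem sub_one_le_norm_add_intCast_mul (hw : 1 ≤ w) (hz : ‖z‖ ≤ 1) {n : ℤ}
    (hn : n ≠ 0) : w - 1 ≤ ‖z + n * w‖ := by
  have hn1 : (1 : ℝ) ≤ |(n : ℝ)| := by exact_mod_cast Int.one_le_abs hn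
  have := abs_mul_sub_one_le_norm_add_intCast_mul (by linarith : 0 ≤ w) hz hn
  nlinarith

theorem add_intCast_mul_ne_zero (hw : 1 < w) (hz : ‖z‖ ≤ 1) {n : ℤ} (hn : n ≠ 0) :
    z + n * w ≠ 0 :=
  norm_pos_iff.mp ((sub_pos.mpr hw).trans_le (sub_one_le_norm_add_intCast_mul hw.le hz hn))

theorem norm_neg_one_div_add_intCast_mul_le (hw : 1 < w) (hz : ‖z‖ ≤ 1) {n : ℤ}
    (hn : n ≠ 0) : ‖-1 / (z + n * w)‖ ≤ 1 / (w - 1) := by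
  rw [norm_div, norm_neg, norm_one]
  exact one_div_le_one_div_of_le (sub_pos.mpr hw)
    (sub_one_le_norm_add_intCast_mul hw.le hz hn)

theorem exists_norm_comp_neg_one_div_add_intCast_mul_le {h : ℂ → ℂ} {r : ℝ}
    (hh : ContinuousOn h (Metric.ball 0 r)) (hw : 1 < w) (hr : 1 / (w - 1) < r)
    (hz : ‖z‖ ≤ 1) :
    ∃ C, ∀ n : {n : ℤ // n ≠ 0}, ‖h (-1 / (z + n.1 * w))‖ ≤ C := by
  obtain ⟨C, hC⟩ := (isCompact_closedBall (0 : ℂ) (1 / (w - 1))).exists_bound_of_continuousOn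
      (hh.mono (Metric.closedBall_subset_ball hr))
  refine ⟨C, fun n => hC _ ?_⟩
  rw [mem_closedBall_zero_iff]
  exact norm_neg_one_div_add_intCast_mul_le hw hz n.2

theorem norm_add_intCast_mul_cpow_neg_one_le_one (hw : 2 ≤ w) (hz : ‖z‖ ≤ 1) {n : ℤ}
    (hn : n ≠ 0) : ‖(z + n * w) ^ (-1 : ℂ)‖ ≤ 1 := by
  rw [cpow_neg_one, norm_inv]
  have := sub_one_le_norm_add_intCast_mul (by linarith : 1 ≤ w) hz hn
  exact inv_le_one_of_one_le₀ (by linarith)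

theorem summable_norm_sq_add_intCast_mul_cpow_neg (hw : 1 < w) (hz : ‖z‖ ≤ 1) {s : ℂ}
    (hs : 1 / 2 < s.re) :
    Summable fun n : {n : ℤ // n ≠ 0} => ‖((z + n.1 * w) ^ 2) ^ (-s)‖ := by
  have hcomp : Summable fun n : {n : ℤ // n ≠ 0} =>
      Real.exp (π * |s.im|) * (w - 1) ^ (-(2 * s.re)) * |(n.1 : ℝ)| ^ (-(2 * s.re)) :=
    ((summable_abs_int_rpow (by linarith)).subtype _).mul_left _
  refine .of_nonneg_of_le (fun _ => norm_nonneg _) (fun n => ?_) hcomp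
  have hlow := abs_mul_sub_one_le_norm_add_intCast_mul (by linarith : 0 ≤ w) hz n.2
  have hn1 : (1 : ℝ) ≤ |(n.1 : ℝ)| := by exact_mod_cast Int.one_le_abs n.2
  calc ‖((z + n.1 * w) ^ 2) ^ (-s)‖
      ≤ ‖(z + n.1 * w) ^ 2‖ ^ (-s).re * Real.exp (π * |(-s).im|) :=
        norm_cpow_le_rpow_mul_exp _ _
    _ = ‖z + n.1 * w‖ ^ (-(2 * s.re)) * Real.exp (π * |s.im|) := by
        rw [norm_pow, ← Real.rpow_natCast, ← Real.rpow_mul (norm_nonneg _)]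
        simp
    _ ≤ (|(n.1 : ℝ)| * (w - 1)) ^ (-(2 * s.re)) * Real.exp (π * |s.im|) := by
        gcongr ?_ * _
        exact Real.rpow_le_rpow_of_nonpos (by nlinarith) hlow (by linarith)
    _ = _ := by rw [Real.mul_rpow (abs_nonneg _) (by linarith)]; ring

end Lattice

theorem apply_neg_one_div_eq {f g : ℂ → ℂ}
    (hg : ∀ u : ℂ, u ≠ 0 → g u = (f u - f 0) / u) {d : ℂ} (hd : d ≠ 0) :
    f (-1 / d) = f 0 - d ^ (-1 : ℂ) * g (-1 / d) := by
  have hu : -1 / d ≠ 0 := div_ne_zero (neg_ne_zero.mpr one_ne_zero) hd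
  rw [hg _ hu, cpow_neg_one]
  field_simp
  ring

theorem transfer_operator_one_step_general (w : ℝ) (hw : 2 < w)
    (r : ℝ) (hr : 1 / (w - 1) < r)
    (f g : ℂ → ℂ) (hf : DifferentiableOn ℂ f (Metric.ball 0 r))
    (hg0 : g 0 = deriv f 0) (hg : ∀ u : ℂ, u ≠ 0 → g u = (f u - f 0) / u) :
    DifferentiableOn ℂ g (Metric.ball 0 r) ∧
    ∀ s : ℂ, 1 / 2 < s.re → ∀ z : ℂ, ‖z‖ < 1 →
      Summable (fun n : {n : ℤ // n ≠ 0} =>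
        ‖((z + (n.1 : ℂ) * (w : ℂ)) ^ 2) ^ (-s) * f (-1 / (z + (n.1 : ℂ) * (w : ℂ)))‖) ∧
      Summable (fun n : {n : ℤ // n ≠ 0} =>
        ‖((z + (n.1 : ℂ) * (w : ℂ)) ^ 2) ^ (-s)‖) ∧
      Summable (fun n : {n : ℤ // n ≠ 0} =>
        ‖((z + (n.1 : ℂ) * (w : ℂ)) ^ 2) ^ (-s) * (z + (n.1 : ℂ) * (w : ℂ)) ^ (-1 : ℂ) *
          g (-1 / (z + (n.1 : ℂ) * (w : ℂ)))‖) ∧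
      ∑' n : {n : ℤ // n ≠ 0},
          ((z + (n.1 : ℂ) * (w : ℂ)) ^ 2) ^ (-s) * f (-1 / (z + (n.1 : ℂ) * (w : ℂ)))
        = f 0 * ∑' n : {n : ℤ // n ≠ 0}, ((z + (n.1 : ℂ) * (w : ℂ)) ^ 2) ^ (-s)
          - ∑' n : {n : ℤ // n ≠ 0},
              ((z + (n.1 : ℂ) * (w : ℂ)) ^ 2) ^ (-s) * (z + (n.1 : ℂ) * (w : ℂ)) ^ (-1 : ℂ) *
                g (-1 / (z + (n.1 : ℂ) * (w : ℂ))) := by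
  have hw1 : 1 < w := by linarith
  have h0 : (0 : ℂ) ∈ Metric.ball 0 r := by
    simpa using (one_div_pos.mpr (sub_pos.mpr hw1)).trans hr
  have hgd : DifferentiableOn ℂ g (Metric.ball 0 r) := by
    rw [eq_dslope_zero_of_eq_div hg0 hg]
    exact (differentiableOn_dslope (Metric.isOpen_ball.mem_nhds h0)).mpr hf
  refine ⟨hgd, fun s hs z hz => ?_⟩
  obtain ⟨Cf, hCf⟩ := exists_norm_comp_neg_one_div_add_intCast_mul_le hf.continuousOn
    hw1 hr hz.le
  obtain ⟨Cg, hCg⟩ := exists_norm_comp_neg_one_div_add_intCast_mul_le hgd.continuousOn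
    hw1 hr hz.le
  have hsum_pow := summable_norm_sq_add_intCast_mul_cpow_neg hw1 hz.le hs
  have hsum_g := (hsum_pow.norm_mul_of_norm_le
    fun n => norm_add_intCast_mul_cpow_neg_one_le_one hw.le hz.le n.2).norm_mul_of_norm_le hCg
  refine ⟨hsum_pow.norm_mul_of_norm_le hCf, hsum_pow, hsum_g, ?_⟩
  rw [← tsum_mul_left, ← hsum_pow.of_norm.mul_left (f 0) |>.tsum_sub hsum_g.of_norm]
  refine tsum_congr fun n => ?_
  rw [apply_neg_one_div_eq hg (add_intCast_mul_ne_zero hw1 hz.le n.2)]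
  ring

theorem transfer_operator_one_step (w : ℝ) (hw : 2 < w)
    (r : ℝ) (hr : 1 / (w - 1) < r) (hr1 : r < 1)
    (f g : ℂ → ℂ) (hf : DifferentiableOn ℂ f (Metric.ball 0 r))
    (hg0 : g 0 = deriv f 0) (hg : ∀ u : ℂ, u ≠ 0 → g u = (f u - f 0) / u) :
    DifferentiableOn ℂ g (Metric.ball 0 r) ∧
    ∀ s : ℂ, 1 / 2 < s.re → ∀ z : ℂ, ‖z‖ < 1 →
      Summable (fun n : {n : ℤ // n ≠ 0} =>
        ‖((z + (n.1 : ℂ) * (w : ℂ)) ^ 2) ^ (-s) * f (-1 / (z + (n.1 : ℂ) * (w : ℂ)))‖) ∧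
      Summable (fun n : {n : ℤ // n ≠ 0} =>
        ‖((z + (n.1 : ℂ) * (w : ℂ)) ^ 2) ^ (-s)‖) ∧
      Summable (fun n : {n : ℤ // n ≠ 0} =>
        ‖((z + (n.1 : ℂ) * (w : ℂ)) ^ 2) ^ (-s) * (z + (n.1 : ℂ) * (w : ℂ)) ^ (-1 : ℂ) *
          g (-1 / (z + (n.1 : ℂ) * (w : ℂ)))‖) ∧
      ∑' n : {n : ℤ // n ≠ 0},
          ((z + (n.1 : ℂ) * (w : ℂ)) ^ 2) ^ (-s) * f (-1 / (z + (n.1 : ℂ) * (w : ℂ)))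
        = f 0 * ∑' n : {n : ℤ // n ≠ 0}, ((z + (n.1 : ℂ) * (w : ℂ)) ^ 2) ^ (-s)
          - ∑' n : {n : ℤ // n ≠ 0},
              ((z + (n.1 : ℂ) * (w : ℂ)) ^ 2) ^ (-s) * (z + (n.1 : ℂ) * (w : ℂ)) ^ (-1 : ℂ) *
                g (-1 / (z + (n.1 : ℂ) * (w : ℂ))) :=
  transfer_operator_one_step_general w hw r hr f g hf hg0 hg
end
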